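/- Let k ≥ 1, m ≥ 2, let w* ∈ ℝ^m be nonzero, and let M > 0. Suppose w_1, w_2 ∈ ℝ^m satisfy ‖w_1‖ ≥ M and ‖w_2‖ ≥ M, and that there exists a unit vector e orthogonal to w* such that both w_1 and w_2 lie in the half-plane {a·w* + b·e : a ∈ ℝ, b ≥ 0}. Then ‖G(w_1) − G(w_2)‖ ≤ (1 + 3‖w*‖/M)·‖w_1 − w_2‖. -/

import Mathlib

open scoped RealInnerProductSpace
open InnerProductGeometry Real Classical

/-- The ReLU function `σ(z) = max{z, 0}`. -/
noncomputable def relu (z : ℝ) : ℝ := max z 0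

/-- `g u v = (1/(2π))·‖u‖·‖v‖·(sin θ_{u,v} + (π − θ_{u,v})·cos θ_{u,v})`. -/
noncomputable def g {E : Type*} [NormedAddCommGroup E] [InnerProductSpace ℝ E]
    (u v : E) : ℝ :=
  (1 / (2 * π)) * ‖u‖ * ‖v‖ *
    (Real.sin (angle u v) + (π - angle u v) * Real.cos (angle u v))

/-- The no-overlap population loss
`ℓ(w) = (1/k²)·(γ‖w‖² − 2k·g(w,w*) − 2β‖w‖‖w*‖ + γ‖w*‖²)`,
where `β = (k²−k)/(2π)` and `γ = β + k/2`. -/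
noncomputable def nol {m : ℕ} (k : ℕ) (ws : EuclideanSpace ℝ (Fin m))
    (w : EuclideanSpace ℝ (Fin m)) : ℝ :=
  (1 / (k : ℝ) ^ 2) *
    (((((k : ℝ) ^ 2 - k) / (2 * π)) + (k : ℝ) / 2) * ‖w‖ ^ 2
      - 2 * (k : ℝ) * g w ws
      - 2 * (((k : ℝ) ^ 2 - k) / (2 * π)) * ‖w‖ * ‖ws‖
      + ((((k : ℝ) ^ 2 - k) / (2 * π)) + (k : ℝ) / 2) * ‖ws‖ ^ 2)

/-- The gradient of the no-overlap population loss: `G(0) = 0` and, for `w ≠ 0`,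
`G(w) = (1/k²)·[(k + (k²−k)/π − (k‖w*‖ sin θ_{w,w*})/(π‖w‖) − ((k²−k)‖w*‖)/(π‖w‖))·w
        − (k/π)·(π − θ_{w,w*})·w*]`. -/
noncomputable def nG {m : ℕ} (k : ℕ) (ws : EuclideanSpace ℝ (Fin m))
    (w : EuclideanSpace ℝ (Fin m)) : EuclideanSpace ℝ (Fin m) :=
  if w = 0 then 0 else
    (1 / (k : ℝ) ^ 2) •
      ((((k : ℝ) + ((k : ℝ) ^ 2 - k) / π
          - ((k : ℝ) * ‖ws‖ * Real.sin (angle w ws)) / (π * ‖w‖)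
          - (((k : ℝ) ^ 2 - k) * ‖ws‖) / (π * ‖w‖)) • w)
        - (((k : ℝ) / π) * (π - angle w ws)) • ws)

/-- `α(k) = 1/k + (k²−k)/(πk²)`. -/
noncomputable def alphac (k : ℕ) : ℝ := 1 / (k : ℝ) + ((k : ℝ) ^ 2 - k) / (π * (k : ℝ) ^ 2)

/-!
For `w ≠ 0` the gradient splits as
`G(w) = α w − (πk)⁻¹ (‖w*‖ (sin θ_w + k − 1) ŵ + (π − θ_w) w*)`, where `ŵ = w / ‖w‖`,
`θ_w = θ_{w,w*}` and `α = alphac k ≤ 1`. On `{‖w‖ ≥ M}` the direction `ŵ` is `2/M`-Lipschitz, and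
hence `θ_w` is `π/M`-Lipschitz: `|θ_{w₁} − θ_{w₂}| ≤ θ_{w₁,w₂}` by the triangle inequality for
angles, and arc length on the unit sphere is at most `π/2` times chord length. The three terms
therefore change by at most `(α + (2/k + 2/π) ‖w*‖ / M) ‖w₁ − w₂‖ ≤ (1 + 3‖w*‖/M) ‖w₁ − w₂‖`.
-/

section Geometry

variable {V : Type*} [NormedAddCommGroup V] [InnerProductSpace ℝ V]

lemma norm_normalize_sub_normalize_le {x : V} (hx : x ≠ 0) (y : V) :
    ‖NormedSpace.normalize x - NormedSpace.normalize y‖ ≤ 2 * ‖x - y‖ / ‖x‖ := by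
  have hx' : 0 < ‖x‖ := norm_pos_iff.2 hx
  by_cases hy : y = 0
  · rw [hy, sub_zero, NormedSpace.normalize_zero_eq_zero, sub_zero,
      NormedSpace.norm_normalize_eq_one_iff.2 hx, mul_div_assoc, div_self hx'.ne']
    norm_num
  have hsplit : NormedSpace.normalize x - NormedSpace.normalize y =
      ‖x‖⁻¹ • (x - y) + ‖x‖⁻¹ • (‖y‖ - ‖x‖) • NormedSpace.normalize y := by
    simp only [NormedSpace.normalize, smul_sub, smul_smul]
    match_scalars <;> field_simp
    ring
  calc ‖NormedSpace.normalize x - NormedSpace.normalize y‖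
      ≤ ‖x‖⁻¹ * ‖x - y‖ + ‖x‖⁻¹ * |‖y‖ - ‖x‖| := by
        rw [hsplit]
        refine (norm_add_le _ _).trans_eq ?_
        rw [norm_smul, norm_smul, norm_smul, NormedSpace.norm_normalize_eq_one_iff.2 hy]
        simp
    _ ≤ ‖x‖⁻¹ * ‖x - y‖ + ‖x‖⁻¹ * ‖x - y‖ := by
        gcongr
        rw [norm_sub_rev]
        exact abs_norm_sub_norm_le y x
    _ = 2 * ‖x - y‖ / ‖x‖ := by ring

lemma norm_normalize_sub_normalize_le_of_le_norm {M : ℝ} (hM : 0 < M) {x : V} (hx : M ≤ ‖x‖)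
    (y : V) : ‖NormedSpace.normalize x - NormedSpace.normalize y‖ ≤ 2 / M * ‖x - y‖ := by
  refine (norm_normalize_sub_normalize_le (norm_pos_iff.1 (hM.trans_le hx)) y).trans ?_
  rw [div_mul_eq_mul_div]
  gcongr

lemma angle_le_pi_div_two_mul_norm_sub {x y : V} (hx : ‖x‖ = 1) (hy : ‖y‖ = 1) :
    angle x y ≤ π / 2 * ‖x - y‖ := by
  set θ := angle x y
  have hθ₀ : 0 ≤ θ := angle_nonneg x y
  have hθπ : θ ≤ π := angle_le_pi x y
  have hchord : ‖x - y‖ ^ 2 = (2 * sin (θ / 2)) ^ 2 := by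
    have hcos : cos θ = 1 - 2 * sin (θ / 2) ^ 2 := by
      have h := cos_two_mul' (θ / 2)
      rw [mul_div_cancel₀ _ two_ne_zero] at h
      linarith [cos_sq_add_sin_sq (θ / 2)]
    rw [norm_sub_sq_real, inner_eq_cos_angle_of_norm_eq_one hx hy, hx, hy, hcos]
    ring
  have hjordan : 2 / π * (θ / 2) ≤ sin (θ / 2) := mul_le_sin (by linarith) (by linarith)
  have hsq : (2 / π * θ) ^ 2 ≤ ‖x - y‖ ^ 2 := by
    rw [hchord]
    nlinarith [show 0 ≤ 2 / π * (θ / 2) by positivity]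
  have hchord_ge : 2 / π * θ ≤ ‖x - y‖ :=
    (pow_le_pow_iff_left₀ (by positivity) (norm_nonneg _) two_ne_zero).1 hsq
  calc θ = π / 2 * (2 / π * θ) := by field_simp
    _ ≤ π / 2 * ‖x - y‖ := by gcongr

lemma abs_angle_sub_angle_le_of_le_norm {M : ℝ} (hM : 0 < M) {x y : V} (hx : M ≤ ‖x‖)
    (hy : M ≤ ‖y‖) (z : V) :
    |angle x z - angle y z| ≤ π / M * ‖x - y‖ := by
  have hx0 : x ≠ 0 := norm_pos_iff.1 (hM.trans_le hx)
  have hy0 : y ≠ 0 := norm_pos_iff.1 (hM.trans_le hy)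
  have htri : |angle x z - angle y z| ≤ angle x y := abs_sub_le_iff.2
    ⟨by linarith [angle_le_angle_add_angle x y z],
     by linarith [angle_le_angle_add_angle y x z, angle_comm x y]⟩
  calc |angle x z - angle y z| ≤ angle x y := htri
    _ = angle (NormedSpace.normalize x) (NormedSpace.normalize y) := by
        rw [angle_normalize_left, angle_normalize_right]
    _ ≤ π / 2 * ‖NormedSpace.normalize x - NormedSpace.normalize y‖ :=
        angle_le_pi_div_two_mul_norm_sub (NormedSpace.norm_normalize_eq_one_iff.2 hx0)
          (NormedSpace.norm_normalize_eq_one_iff.2 hy0)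
    _ ≤ π / 2 * (2 / M * ‖x - y‖) := by
        gcongr
        exact norm_normalize_sub_normalize_le_of_le_norm hM hx y
    _ = π / M * ‖x - y‖ := by ring

end Geometry

section Gradient

variable {m : ℕ} (k : ℕ) (ws : EuclideanSpace ℝ (Fin m))

lemma alphac_nonneg : 0 ≤ alphac k := by
  rcases Nat.eq_zero_or_pos k with rfl | hk
  · simp [alphac]
  have hk' : (1 : ℝ) ≤ k := by exact_mod_cast hk
  unfold alphac
  have : 0 ≤ (k : ℝ) ^ 2 - k := by nlinarith
  positivity

lemma alphac_le_one : alphac k ≤ 1 := by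
  rcases Nat.eq_zero_or_pos k with rfl | hk
  · simp [alphac]
  have hk' : (1 : ℝ) ≤ k := by exact_mod_cast hk
  have hπ := pi_gt_three
  unfold alphac
  rw [div_add_div _ _ (by positivity) (by positivity), div_le_one (by positivity)]
  nlinarith [mul_nonneg (mul_nonneg (sub_nonneg.2 hk') (sq_nonneg (k : ℝ)))
    (by linarith : (0 : ℝ) ≤ π - 1)]

lemma nG_eq_of_ne_zero {w : EuclideanSpace ℝ (Fin m)} (hw : w ≠ 0) :
    nG k ws w = alphac k • w - (π * k)⁻¹ •
      ((‖ws‖ * (sin (angle w ws) + (k - 1))) • NormedSpace.normalize w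
        + (π - angle w ws) • ws) := by
  rcases Nat.eq_zero_or_pos k with rfl | hk
  · simp [nG, alphac]
  have hw' : ‖w‖ ≠ 0 := norm_ne_zero_iff.2 hw
  have hk' : (k : ℝ) ≠ 0 := by positivity
  rw [nG, if_neg hw, alphac, NormedSpace.normalize]
  match_scalars <;> field_simp
  ring

lemma norm_nG_sub_nG_le (hk : 1 ≤ k) {w₁ w₂ : EuclideanSpace ℝ (Fin m)} (hw₁ : w₁ ≠ 0)
    (hw₂ : w₂ ≠ 0) :
    ‖nG k ws w₁ - nG k ws w₂‖ ≤ alphac k * ‖w₁ - w₂‖ + ‖ws‖ / (π * k) *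
      (2 * |angle w₁ ws - angle w₂ ws|
        + k * ‖NormedSpace.normalize w₁ - NormedSpace.normalize w₂‖) := by
  set θ₁ := angle w₁ ws
  set θ₂ := angle w₂ ws
  set u₁ := NormedSpace.normalize w₁
  set u₂ := NormedSpace.normalize w₂
  have hu₁ : ‖u₁‖ = 1 := NormedSpace.norm_normalize_eq_one_iff.2 hw₁
  have hk' : (1 : ℝ) ≤ k := by exact_mod_cast hk
  have hsin : |sin θ₂ + (k - 1)| ≤ k := by
    have := sin_nonneg_of_nonneg_of_le_pi (angle_nonneg w₂ ws) (angle_le_pi w₂ ws)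
    rw [abs_of_nonneg (by linarith)]
    linarith [sin_le_one θ₂]
  have hdiff : nG k ws w₁ - nG k ws w₂ = alphac k • (w₁ - w₂) - (π * k)⁻¹ •
      (‖ws‖ • ((sin θ₁ - sin θ₂) • u₁ + (sin θ₂ + (k - 1)) • (u₁ - u₂))
        + (θ₂ - θ₁) • ws) := by
    rw [nG_eq_of_ne_zero k ws hw₁, nG_eq_of_ne_zero k ws hw₂]
    module
  have hcoeff : ‖(sin θ₁ - sin θ₂) • u₁ + (sin θ₂ + (k - 1)) • (u₁ - u₂)‖
      ≤ |θ₁ - θ₂| + k * ‖u₁ - u₂‖ := by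
    refine (norm_add_le _ _).trans ?_
    rw [norm_smul, norm_smul, hu₁, mul_one, Real.norm_eq_abs, Real.norm_eq_abs]
    exact add_le_add (abs_sin_sub_sin_le θ₁ θ₂) (by gcongr)
  rw [hdiff]
  calc _ ≤ ‖alphac k • (w₁ - w₂)‖ + ‖(π * k)⁻¹ •
        (‖ws‖ • ((sin θ₁ - sin θ₂) • u₁ + (sin θ₂ + (k - 1)) • (u₁ - u₂))
          + (θ₂ - θ₁) • ws)‖ := norm_sub_le _ _
    _ ≤ alphac k * ‖w₁ - w₂‖ + (π * k)⁻¹ *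
        (‖ws‖ * (|θ₁ - θ₂| + k * ‖u₁ - u₂‖) + |θ₁ - θ₂| * ‖ws‖) := by
      rw [norm_smul, norm_smul, Real.norm_eq_abs, abs_of_nonneg (alphac_nonneg k),
        Real.norm_eq_abs, abs_of_pos (by positivity)]
      gcongr
      refine (norm_add_le _ _).trans ?_
      rw [norm_smul, norm_smul, norm_norm, Real.norm_eq_abs, abs_sub_comm]
      gcongr
    _ = _ := by ring

end Gradient

theorem stmt13_general (k m : ℕ) (hk : 1 ≤ k)
    (ws : EuclideanSpace ℝ (Fin m))
    (M : ℝ) (hM : 0 < M)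
    (w1 w2 : EuclideanSpace ℝ (Fin m)) (h1 : M ≤ ‖w1‖) (h2 : M ≤ ‖w2‖) :
    ‖nG k ws w1 - nG k ws w2‖ ≤ (1 + 3 * ‖ws‖ / M) * ‖w1 - w2‖ := by
  have hangle := abs_angle_sub_angle_le_of_le_norm hM h1 h2 ws
  have hdir := norm_normalize_sub_normalize_le_of_le_norm hM h1 w2
  have hk' : (1 : ℝ) ≤ k := by exact_mod_cast hk
  have hπ := pi_gt_three
  have hcoeff : 2 / (k : ℝ) + 2 / π ≤ 3 := by
    have : 2 / (k : ℝ) ≤ 2 := div_le_self zero_le_two hk'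
    have : 2 / π ≤ 1 := (div_le_one pi_pos).2 (by linarith)
    linarith
  calc ‖nG k ws w1 - nG k ws w2‖
      ≤ alphac k * ‖w1 - w2‖ + ‖ws‖ / (π * k) * (2 * |angle w1 ws - angle w2 ws|
          + k * ‖NormedSpace.normalize w1 - NormedSpace.normalize w2‖) :=
        norm_nG_sub_nG_le k ws hk (norm_pos_iff.1 (hM.trans_le h1))
          (norm_pos_iff.1 (hM.trans_le h2))
    _ ≤ 1 * ‖w1 - w2‖ + ‖ws‖ / (π * k) * (2 * (π / M * ‖w1 - w2‖)
          + k * (2 / M * ‖w1 - w2‖)) := by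
        gcongr
        exact alphac_le_one k
    _ = ‖w1 - w2‖ + (2 / k + 2 / π) * (‖ws‖ / M) * ‖w1 - w2‖ := by
        field_simp
    _ ≤ ‖w1 - w2‖ + 3 * (‖ws‖ / M) * ‖w1 - w2‖ := by gcongr
    _ = (1 + 3 * ‖ws‖ / M) * ‖w1 - w2‖ := by ring

/-- If `‖w_1‖, ‖w_2‖ ≥ M > 0` and `w_1`, `w_2` lie on the same closed half-plane
`{a·w* + b·e : a ∈ ℝ, b ≥ 0}` determined by a unit vector `e` orthogonal to `w*`, then
`‖G(w_1) − G(w_2)‖ ≤ (1 + 3‖w*‖/M)·‖w_1 − w_2‖`. -/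
theorem stmt13 (k m : ℕ) (hk : 1 ≤ k) (hm : 2 ≤ m)
    (ws : EuclideanSpace ℝ (Fin m)) (hws : ws ≠ 0)
    (M : ℝ) (hM : 0 < M)
    (w1 w2 : EuclideanSpace ℝ (Fin m)) (h1 : M ≤ ‖w1‖) (h2 : M ≤ ‖w2‖)
    (e : EuclideanSpace ℝ (Fin m)) (he : ‖e‖ = 1) (heo : ⟪ws, e⟫ = 0)
    (hw1 : ∃ a b : ℝ, 0 ≤ b ∧ w1 = a • ws + b • e)
    (hw2 : ∃ a b : ℝ, 0 ≤ b ∧ w2 = a • ws + b • e) :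
    ‖nG k ws w1 - nG k ws w2‖ ≤ (1 + 3 * ‖ws‖ / M) * ‖w1 - w2‖ :=
  stmt13_general k m hk ws M hM w1 w2 h1 h2
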